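/- In the cluster graph for n-permutations, for each cluster Y there exists a unique cluster X such that there are exactly two edges from X to Y. Equivalently: for each permutation τ of [n-1], there is a unique permutation σ of [n-1] such that exactly two permutations x of [n] satisfy reduce(x_1⋯x_{n-1}) = σ and reduce(x_2⋯x_n) = τ. -/

import Mathlib

/-- `reduce w` replaces each copy of the i-th smallest value of `w` by `i`. -/
def reduce {m : ℕ} (w : Fin m → ℕ) : Fin m → ℕ :=
  fun i => ((Finset.univ.image w).filter (fun v => v ≤ w i)).card

/-- The first `n-1` letters of a word of length `n`. -/
def firstw {n : ℕ} (w : Fin n → ℕ) : Fin (n - 1) → ℕ :=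
  fun i => w (Fin.castLE (Nat.sub_le n 1) i)

/-- The last `n-1` letters of a word of length `n`. -/
def lastw {n : ℕ} (w : Fin n → ℕ) : Fin (n - 1) → ℕ :=
  fun i => w ⟨i.val + 1, by have := i.isLt; omega⟩

/-- The word (with letters in `{1,…,n}`) associated with a permutation of `[n]`. -/
def permWord {n : ℕ} (x : Equiv.Perm (Fin n)) : Fin n → ℕ := fun i => (x i : ℕ) + 1

/-- The word of a permutation of `[n-1]` indexing a cluster. -/
def clusterWord {n : ℕ} (σ : Equiv.Perm (Fin (n - 1))) : Fin (n - 1) → ℕ :=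
  fun i => (σ i : ℕ) + 1

/-- `x` is an edge of the cluster graph from `σ` to `τ`:
`reduce(x₁⋯x_{n-1}) = σ` and `reduce(x₂⋯x_n) = τ`. -/
def isEdge {n : ℕ} (x : Equiv.Perm (Fin n)) (σ τ : Equiv.Perm (Fin (n - 1))) : Prop :=
  reduce (firstw (permWord x)) = clusterWord σ ∧ reduce (lastw (permWord x)) = clusterWord τ

/-!
An edge `x` into `τ` is determined by its first letter `c = x 0`, since its other letters must be
`c.succAbove (τ i)`; so the edges into `τ` are the `n` permutations `prepend c τ`. The pattern of
the first `n - 1` letters of `prepend c τ` only records on which side of each value `τ i` with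
`i ≠ last` the letter `c` lies, that is, of every value except `t = τ last`. Hence two first
letters give the same source cluster iff they are equal or are `t.castSucc` and `t.succ`:
exactly one source cluster is reached from two first letters.
-/

open Finset Function

section Reduce

variable {k : ℕ}

lemma reduce_apply_of_injective {w : Fin k → ℕ} (hw : Injective w) (i : Fin k) :
    reduce w i = #{j | w j ≤ w i} := by
  rw [reduce, filter_image, card_image_of_injective _ hw]

lemma reduce_lt_reduce {w : Fin k → ℕ} {i j : Fin k} (h : w i < w j) :
    reduce w i < reduce w j :=
  card_lt_card <| (ssubset_iff_of_subset fun v hv => by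
      simp only [mem_filter] at hv ⊢; exact ⟨hv.1, hv.2.trans h.le⟩).2
    ⟨w j, by simp, by simpa using h⟩

lemma reduce_le_reduce_iff {w : Fin k → ℕ} {i j : Fin k} :
    reduce w i ≤ reduce w j ↔ w i ≤ w j :=
  ⟨fun h => not_lt.1 fun h' => (reduce_lt_reduce h').not_ge h,
    fun h => card_le_card fun v hv => by
      simp only [mem_filter] at hv ⊢; exact ⟨hv.1, hv.2.trans h⟩⟩

lemma reduce_eq_reduce_iff {w w' : Fin k → ℕ} (hw : Injective w) (hw' : Injective w') :
    reduce w = reduce w' ↔ ∀ i j, (w i ≤ w j ↔ w' i ≤ w' j) := by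
  refine ⟨fun h i j => by rw [← reduce_le_reduce_iff, h, reduce_le_reduce_iff], fun h => ?_⟩
  funext i
  simp only [reduce_apply_of_injective hw, reduce_apply_of_injective hw', h]

lemma eq_of_reduce_eq_of_range_eq {w w' : Fin k → ℕ} (h : reduce w = reduce w')
    (hr : Set.range w = Set.range w') : w = w' := by
  ext i
  obtain ⟨j, hj⟩ : w' i ∈ Set.range w := hr ▸ Set.mem_range_self i
  have himage : univ.image w = univ.image w' := by
    simpa only [← coe_inj, coe_image, coe_univ, Set.image_univ] using hr
  have hji : reduce w j = reduce w i :=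
    calc reduce w j = reduce w' i := by simp only [reduce, hj, himage]
      _ = reduce w i := by rw [h]
  rw [← hj]
  exact le_antisymm (reduce_le_reduce_iff.1 hji.ge) (reduce_le_reduce_iff.1 hji.le)

lemma injective_permWord (x : Equiv.Perm (Fin k)) : Injective (permWord x) :=
  fun _ _ h => x.injective (Fin.ext (Nat.succ_injective h))

lemma permWord_injective : Injective (permWord : Equiv.Perm (Fin k) → Fin k → ℕ) :=
  fun _ _ h => Equiv.ext fun i => Fin.ext (Nat.succ_injective (congrFun h i))

@[simp]
lemma permWord_le_permWord_iff {x : Equiv.Perm (Fin k)} {i j : Fin k} :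
    permWord x i ≤ permWord x j ↔ x i ≤ x j := by
  simp only [permWord, add_le_add_iff_right, Fin.val_fin_le]

lemma reduce_permWord (σ : Equiv.Perm (Fin k)) : reduce (permWord σ) = permWord σ := by
  funext i
  rw [reduce_apply_of_injective (injective_permWord σ), permWord, ← Fin.card_Iic]
  exact card_equiv σ fun j => by simp [permWord]

lemma reduce_eq_permWord_iff {w : Fin k → ℕ} (hw : Injective w) (σ : Equiv.Perm (Fin k)) :
    reduce w = permWord σ ↔ ∀ i j, (w i ≤ w j ↔ σ i ≤ σ j) := by
  rw [← reduce_permWord σ, reduce_eq_reduce_iff hw (injective_permWord σ)]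
  simp only [permWord_le_permWord_iff]

lemma exists_reduce_eq_permWord {w : Fin k → ℕ} (hw : Injective w) :
    ∃ σ : Equiv.Perm (Fin k), reduce w = permWord σ := by
  have hsort : StrictMono (w ∘ Tuple.sort w) :=
    (Tuple.monotone_sort w).strictMono_of_injective (hw.comp (Tuple.sort w).injective)
  refine ⟨(Tuple.sort w).symm, (reduce_eq_permWord_iff hw _).2 fun i j => ?_⟩
  simpa using hsort.le_iff_le (a := (Tuple.sort w).symm i) (b := (Tuple.sort w).symm j)

end Reduce

lemma Fin.le_succAbove_iff_le_castSucc {n : ℕ} (p : Fin (n + 1)) (i : Fin n) :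
    p ≤ p.succAbove i ↔ p ≤ i.castSucc :=
  (Fin.succAbove_ne p i).symm.le_iff_lt.trans (Fin.lt_succAbove_iff_le_castSucc p i)

lemma Fin.succAbove_le_iff_castSucc_lt {n : ℕ} (p : Fin (n + 1)) (i : Fin n) :
    p.succAbove i ≤ p ↔ i.castSucc < p :=
  (Fin.succAbove_ne p i).le_iff_lt.trans (Fin.succAbove_lt_iff_castSucc_lt p i)

lemma Fin.forall_ne_le_castSucc_iff {n : ℕ} {c c' : Fin (n + 2)} {t : Fin (n + 1)} :
    (∀ v, v ≠ t → (c ≤ v.castSucc ↔ c' ≤ v.castSucc)) ↔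
      c = c' ∨ (c ∈ ({t.castSucc, t.succ} : Set _) ∧ c' ∈ ({t.castSucc, t.succ} : Set _)) := by
  simp only [Set.mem_insert_iff, Set.mem_singleton_iff, Fin.ext_iff, Fin.val_castSucc, Fin.val_succ]
  constructor
  · intro h
    have h' (v : ℕ) (hv : v ≤ n) (hvt : v ≠ t) : (c ≤ v ↔ c' ≤ v) := by
      simpa [Fin.le_def] using h ⟨v, by omega⟩ (by simpa [Fin.ext_iff] using hvt)
    have h1 := h' (min (c : ℕ) c')
    have h2 := h' (min (c : ℕ) c' + 1)
    omega
  · rintro h v hv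
    have : (v : ℕ) ≠ t := Fin.val_ne_of_ne hv
    simp only [Fin.le_def, Fin.val_castSucc]
    omega

section Prepend

variable {k : ℕ}

noncomputable def prepend (c : Fin (k + 1)) (τ : Equiv.Perm (Fin k)) : Equiv.Perm (Fin (k + 1)) :=
  Equiv.ofBijective (Fin.cons c (c.succAbove ∘ τ)) <| Finite.injective_iff_bijective.mp <|
    Fin.cons_injective_iff.2
      ⟨by simp [Set.range_comp], Fin.succAbove_right_injective.comp τ.injective⟩

@[simp]
lemma prepend_zero (c : Fin (k + 1)) (τ : Equiv.Perm (Fin k)) : prepend c τ 0 = c := rfl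

@[simp]
lemma prepend_succ (c : Fin (k + 1)) (τ : Equiv.Perm (Fin k)) (i : Fin k) :
    prepend c τ i.succ = c.succAbove (τ i) := rfl

lemma injective_tail_permWord (x : Equiv.Perm (Fin (k + 1))) : Injective (Fin.tail (permWord x)) :=
  (injective_permWord x).comp (Fin.succ_injective k)

lemma injective_init_permWord (x : Equiv.Perm (Fin (k + 1))) : Injective (Fin.init (permWord x)) :=
  (injective_permWord x).comp (Fin.castSucc_injective _)

lemma reduce_tail_permWord_prepend (c : Fin (k + 1)) (τ : Equiv.Perm (Fin k)) :
    reduce (Fin.tail (permWord (prepend c τ))) = permWord τ :=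
  (reduce_eq_permWord_iff (injective_tail_permWord _) τ).2 fun i j => by
    simp [Fin.tail, Fin.succAbove_le_succAbove_iff]

lemma range_tail_permWord (x : Equiv.Perm (Fin (k + 1))) :
    Set.range (Fin.tail (permWord x)) =
      Set.range (fun v : Fin (k + 1) => (v : ℕ) + 1) \ {(x 0 : ℕ) + 1} := by
  rw [show Fin.tail (permWord x) = permWord x ∘ Fin.succ from rfl, Set.range_comp, Fin.range_succ,
    Set.image_compl_eq_range_sdiff_image (injective_permWord x), Set.image_singleton]
  exact congrArg (· \ _) (EquivLike.range_comp (fun v : Fin (k + 1) => (v : ℕ) + 1) x)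

lemma eq_prepend_of_reduce_tail {x : Equiv.Perm (Fin (k + 1))} {τ : Equiv.Perm (Fin k)}
    (h : reduce (Fin.tail (permWord x)) = permWord τ) : x = prepend (x 0) τ := by
  have htail : Fin.tail (permWord x) = Fin.tail (permWord (prepend (x 0) τ)) :=
    eq_of_reduce_eq_of_range_eq (by rw [h, reduce_tail_permWord_prepend])
      (by rw [range_tail_permWord, range_tail_permWord, prepend_zero])
  apply permWord_injective
  calc permWord x = Fin.cons (permWord x 0) (Fin.tail (permWord x)) := (Fin.cons_self_tail _).symm
    _ = Fin.cons (permWord (prepend (x 0) τ) 0) (Fin.tail (permWord (prepend (x 0) τ))) := by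
      rw [htail]; rfl
    _ = permWord (prepend (x 0) τ) := Fin.cons_self_tail _

lemma reduce_init_permWord_prepend_eq_iff (τ : Equiv.Perm (Fin (k + 1))) (c c' : Fin (k + 2)) :
    reduce (Fin.init (permWord (prepend c τ))) = reduce (Fin.init (permWord (prepend c' τ))) ↔
      ∀ v, v ≠ τ (Fin.last k) → (c ≤ v.castSucc ↔ c' ≤ v.castSucc) := by
  -- Only comparisons of the first letter `c` with a later letter `c.succAbove v` involve `c`,
  -- and they come out as comparisons of `c` with `v.castSucc`.
  rw [reduce_eq_reduce_iff (injective_init_permWord _) (injective_init_permWord _)]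
  simp only [Fin.init, permWord_le_permWord_iff]
  constructor
  · intro h v hv
    obtain ⟨j, rfl⟩ : ∃ j : Fin k, τ j.castSucc = v := by
      obtain ⟨j, hj⟩ := Fin.exists_castSucc_eq.2 fun h => hv (by rw [← h, τ.apply_symm_apply])
      exact ⟨j, by rw [hj, τ.apply_symm_apply]⟩
    simpa [Fin.le_succAbove_iff_le_castSucc] using h 0 j.succ
  · intro h i j
    have hne (j : Fin k) : τ j.castSucc ≠ τ (Fin.last k) :=
      τ.injective.ne (Fin.castSucc_lt_last j).ne
    have h' (v) (hv : v ≠ τ (Fin.last k)) : v.castSucc < c ↔ v.castSucc < c' := by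
      simpa only [not_le] using not_congr (h v hv)
    cases i using Fin.cases <;> cases j using Fin.cases <;>
      simp [Fin.le_succAbove_iff_le_castSucc, Fin.succAbove_le_iff_castSucc_lt,
        Fin.succAbove_le_succAbove_iff, h _ (hne _), h' _ (hne _)]

end Prepend

lemma existsUnique_card_fiber_eq_two {α β γ : Type*} {f : α → γ} {g : β → γ}
    (hg : Injective g) (hf : ∀ a, ∃ b, f a = g b) {a₁ a₂ : α} (hne : a₁ ≠ a₂)
    (hfib : ∀ a a', f a = f a' ↔ a = a' ∨ (a ∈ ({a₁, a₂} : Set α) ∧ a' ∈ ({a₁, a₂} : Set α))) :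
    ∃! b, Nat.card {a // f a = g b} = 2 := by
  have hfiber {a} (ha : a ∈ ({a₁, a₂} : Set α)) : {a' | f a' = f a} = {a₁, a₂} := by
    ext a'
    simp only [Set.mem_ofPred_eq, hfib, ha, and_true, or_iff_right_iff_imp]
    rintro rfl
    exact ha
  have hcard (b) : Nat.card {a // f a = g b} = {a | f a = g b}.ncard := Nat.card_coe_set_eq _
  obtain ⟨b₀, hb₀⟩ := hf a₁
  refine ⟨b₀, show Nat.card _ = 2 from ?_, fun b (hb : Nat.card _ = 2) => ?_⟩
  · rw [hcard, ← hb₀, hfiber (by simp), Set.ncard_pair hne]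
  · rw [hcard, Set.ncard_eq_two] at hb
    obtain ⟨a, a', hne', hs⟩ := hb
    have ha : f a = g b := (Set.ext_iff.1 hs a).2 (by simp)
    have ha' : f a' = g b := (Set.ext_iff.1 hs a').2 (by simp)
    have hmem : a ∈ ({a₁, a₂} : Set α) :=
      (((hfib a a').1 (ha.trans ha'.symm)).resolve_left hne').1
    apply hg
    rw [← ha, ← hb₀]
    exact ((Set.ext_iff.1 (hfiber hmem) a₁).2 (by simp)).symm

-- For `n = m + 2`, `firstw`, `lastw` and `clusterWord` unfold to `Fin.init`, `Fin.tail` and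
-- `permWord`.
lemma card_isEdge_eq {m : ℕ} (σ τ : Equiv.Perm (Fin (m + 1))) :
    Nat.card {x : Equiv.Perm (Fin (m + 2)) // isEdge x σ τ} =
      Nat.card {c // reduce (Fin.init (permWord (prepend c τ))) = permWord σ} :=
  Nat.card_congr
    { toFun x := ⟨x.1 0, by rw [← eq_prepend_of_reduce_tail x.2.2]; exact x.2.1⟩
      invFun c := ⟨prepend c.1 τ, c.2, reduce_tail_permWord_prepend c.1 τ⟩
      left_inv x := Subtype.ext (eq_prepend_of_reduce_tail x.2.2).symm
      right_inv c := rfl }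

/-- For each cluster `τ` there is a unique cluster `σ` joined to it by exactly two
parallel edges. -/
theorem unique_double_edge_in (n : ℕ) (hn : 3 ≤ n) (τ : Equiv.Perm (Fin (n - 1))) :
    ∃! σ : Equiv.Perm (Fin (n - 1)),
      Nat.card {x : Equiv.Perm (Fin n) // isEdge x σ τ} = 2 := by
  obtain ⟨m, rfl⟩ : ∃ m, n = m + 2 := ⟨n - 2, by omega⟩
  simp only [card_isEdge_eq]
  exact existsUnique_card_fiber_eq_two permWord_injective
    (fun c => exists_reduce_eq_permWord (injective_init_permWord _))
    (Fin.castSucc_lt_succ (i := τ (Fin.last m))).ne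
    fun c c' => by rw [reduce_init_permWord_prepend_eq_iff, Fin.forall_ne_le_castSucc_iff]
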